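/- arXiv:2205.15788 — 4 statements merged into one kernel-verified Lean document; each statement's English description precedes it below -/
import Mathlib

section
/- Let G be a residually finite FC-group whose derived subgroup G' is finite. Then the center Z(G) has finite index in G. -/
/-!
Pick, for each of the finitely many nontrivial commutators, a normal subgroup of finite index
avoiding it, and let `N` be their intersection. Then `N` has finite index and `⁅N, G⁆ ≤ N ∩ G'`
contains no nontrivial element, so `N` is central.
-/

namespace Subgroup

variable {G : Type*} [Group G]

theorem le_center_of_disjoint_commutator {N : Subgroup G} [N.Normal]
    (h : Disjoint N (_root_.commutator G)) : N ≤ center G := by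
  rw [← centralizer_univ, ← coe_top, ← commutator_eq_bot_iff_le_centralizer, eq_bot_iff]
  calc ⁅N, ⊤⁆ ≤ N ⊓ ⁅⊤, ⊤⁆ := le_inf (commutator_le_left N ⊤) (commutator_mono le_top le_rfl)
    _ = ⊥ := h.eq_bot

theorem exists_normal_finiteIndex_disjoint_of_finite
    (hres : ∀ g : G, g ≠ 1 → ∃ N : Subgroup G, N.Normal ∧ N.FiniteIndex ∧ g ∉ N)
    {S : Set G} (hS : S.Finite) (h1 : (1 : G) ∉ S) :
    ∃ N : Subgroup G, N.Normal ∧ N.FiniteIndex ∧ Disjoint (N : Set G) S := by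
  induction S, hS using Set.Finite.induction_on with
  | empty => exact ⟨⊤, inferInstance, inferInstance, Set.disjoint_empty _⟩
  | @insert a S _ _ ih =>
    obtain ⟨N, hN, hNfi, hNS⟩ := ih (fun h => h1 (Set.mem_insert_of_mem a h))
    obtain ⟨M, hM, hMfi, haM⟩ := hres a (fun ha => h1 (ha ▸ Set.mem_insert a S))
    refine ⟨M ⊓ N, inferInstance, inferInstance, ?_⟩
    rw [coe_inf, Set.disjoint_insert_right]
    exact ⟨fun ha => haM ha.1, hNS.mono_left Set.inter_subset_right⟩

end Subgroup

theorem center_finiteIndex_of_residuallyFinite_fc_general {G : Type*} [Group G]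
    (hres : ∀ g : G, g ≠ 1 → ∃ N : Subgroup G, N.Normal ∧ N.FiniteIndex ∧ g ∉ N)
    (hcomm : (commutator G : Set G).Finite) :
    (Subgroup.center G).FiniteIndex := by
  obtain ⟨N, hN, hNfi, hNS⟩ := Subgroup.exists_normal_finiteIndex_disjoint_of_finite hres
    (S := (commutator G : Set G) \ {1}) hcomm.sdiff (fun h => h.2 rfl)
  have hNcomm : Disjoint N (commutator G) := Subgroup.disjoint_def.mpr fun hxN hxC =>
    by_contra fun hx1 => Set.disjoint_left.mp hNS hxN (Set.mem_sdiff_singleton.mpr ⟨hxC, hx1⟩)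
  exact Subgroup.finiteIndex_of_le (Subgroup.le_center_of_disjoint_commutator hNcomm)

/-- A residually finite FC-group with finite derived subgroup has center of finite index. -/
theorem center_finiteIndex_of_residuallyFinite_fc {G : Type*} [Group G]
    (hFC : ∀ g : G, (Subgroup.centralizer {g}).FiniteIndex)
    (hres : ∀ g : G, g ≠ 1 → ∃ N : Subgroup G, N.Normal ∧ N.FiniteIndex ∧ g ∉ N)
    (hcomm : (commutator G : Set G).Finite) :
    (Subgroup.center G).FiniteIndex :=
  center_finiteIndex_of_residuallyFinite_fc_general hres hcomm
end

section
/- Let G be a finite group and H ≤ G. The element e_H = Σ_{K ≤ H} (μ(K,H)/[N_G(H):K]) · [G/K] of the rational Burnside algebra B_ℚ(G) = ℚ ⊗ B(G) is an idempotent, and for any subgroup U ≤ G, the number of U-fixed points |e_H^U| equals 1 if U is G-conjugate to H and 0 otherwise. -/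
/-!
Counting cosets, `|K|` times the mark of `G/K` at `U` is the number of `g` with `U ≤ gKg⁻¹`,
and `[N_G(H):K] · |K| = |N_G(H)|`. Hence `|N_G(H)| · |e_H^U| = Σ_g Σ_{g⁻¹Ug ≤ K ≤ H} μ(K,H)`,
and Möbius inversion collapses the inner sum to `[g⁻¹Ug = H]`. The `g` with `gHg⁻¹ = U` form
a left coset of `N_G(H)` if there are any, so the mark is `1` or `0`.
-/

open scoped Classical

noncomputable instance subgroupLocallyFiniteOrder {G : Type*} [Group G] [Fintype G] :
    LocallyFiniteOrder (Subgroup G) := Fintype.toLocallyFiniteOrder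

/-- The mark of the transitive `G`-set `G/K` at the subgroup `U`: the number of
`U`-fixed points of `G/K`. -/
noncomputable def burnsideMark {G : Type*} [Group G] [Fintype G] (K U : Subgroup G) : ℚ :=
  (Nat.card {x : G ⧸ K // ∀ u ∈ U, u • x = x} : ℚ)

/-- The mark at `U` of Gluck's element `e_H = Σ_{K ≤ H} (μ(K,H)/[N_G(H):K]) · [G/K]`
of the rational Burnside algebra `B_ℚ(G)`. -/
noncomputable def gluckMark {G : Type*} [Group G] [Fintype G] (H U : Subgroup G) : ℚ :=
  ∑ K ∈ Finset.univ.filter (· ≤ H),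
    (IncidenceAlgebra.mu ℚ K H / (K.relIndex (Subgroup.normalizer (H : Set G)) : ℚ)) * burnsideMark K U

theorem IncidenceAlgebra.sum_mu_mul_card_le {𝕜 α ι : Type*} [Ring 𝕜] [PartialOrder α]
    [LocallyFiniteOrder α] [Fintype α] [Fintype ι] (f : ι → α) (b : α) :
    ∑ a ∈ Finset.univ.filter (· ≤ b), mu 𝕜 a b * (Nat.card {i // f i ≤ a} : 𝕜) =
      Nat.card {i // f i = b} := by
  simp only [Nat.card_eq_fintype_card, Fintype.card_subtype, Finset.card_filter, Nat.cast_sum,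
    Nat.cast_ite, Nat.cast_one, Nat.cast_zero, Finset.mul_sum, mul_ite, mul_one, mul_zero]
  rw [Finset.sum_comm]
  refine Finset.sum_congr rfl fun i _ => ?_
  have hIcc : (Finset.univ.filter (· ≤ b)).filter (f i ≤ ·) = Finset.Icc (f i) b := by
    ext a; simp [and_comm]
  rw [← Finset.sum_filter, hIcc, sum_Icc_mu_left]

namespace Subgroup

variable {G : Type*} [Group G]

theorem le_map_equiv_iff {N : Type*} [Group N] (e : G ≃* N) (U : Subgroup N) (K : Subgroup G) :
    U ≤ K.map e.toMonoidHom ↔ U.comap e.toMonoidHom ≤ K := by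
  simp only [MulEquiv.toMonoidHom_eq_coe]
  rw [map_equiv_eq_comap_symm, ← map_le_iff_le_comap, comap_equiv_eq_map_symm]

theorem map_equiv_eq_iff {N : Type*} [Group N] (e : G ≃* N) (U : Subgroup N) (H : Subgroup G) :
    H.map e.toMonoidHom = U ↔ U.comap e.toMonoidHom = H := by
  rw [le_antisymm_iff, le_antisymm_iff, le_map_equiv_iff, map_le_iff_le_comap]
  exact and_comm

theorem map_conj_mul (a b : G) (H : Subgroup G) :
    H.map (MulAut.conj (a * b)).toMonoidHom =
      (H.map (MulAut.conj b).toMonoidHom).map (MulAut.conj a).toMonoidHom := by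
  rw [map_map]; congr 1; ext; simp [mul_assoc]

theorem map_conj_eq_map_conj_iff (H : Subgroup G) (g₀ g : G) :
    H.map (MulAut.conj g).toMonoidHom = H.map (MulAut.conj g₀).toMonoidHom ↔
      g₀⁻¹ * g ∈ normalizer (H : Set G) := by
  rw [mem_normalizer_iff_map_conj_eq, ← MulEquiv.toMonoidHom_eq_coe]
  conv_rhs => rw [← (map_injective (f := (MulAut.conj g₀).toMonoidHom)
    (MulAut.conj g₀).injective).eq_iff, ← map_conj_mul, mul_inv_cancel_left]

theorem stabilizer_mk_eq_map_conj (K : Subgroup G) (g : G) :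
    MulAction.stabilizer G (g : G ⧸ K) = K.map (MulAut.conj g).toMonoidHom := by
  have := MulAction.stabilizer_smul_eq_stabilizer_map_conj g ((1 : G) : G ⧸ K)
  rwa [MulAction.stabilizer_quotient, MulAction.Quotient.smul_mk, smul_eq_mul, mul_one] at this

theorem relIndex_mul_card {K N : Subgroup G} (h : K ≤ N) :
    K.relIndex N * Nat.card K = Nat.card N := by
  rw [← relIndex_bot_left, ← relIndex_bot_left, mul_comm, relIndex_mul_relIndex _ _ _ bot_le h]

theorem card_map_conj_eq (H U : Subgroup G) :
    Nat.card {g : G // H.map (MulAut.conj g).toMonoidHom = U} =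
      if ∃ g : G, H.map (MulAut.conj g).toMonoidHom = U then Nat.card (normalizer (H : Set G))
      else 0 := by
  split_ifs with hconj
  · obtain ⟨g₀, rfl⟩ := hconj
    exact Nat.card_congr <| Equiv.subtypeEquiv (Equiv.mulLeft g₀⁻¹) fun g =>
      map_conj_eq_map_conj_iff H g₀ g
  · exact Nat.card_eq_zero.mpr (Or.inl ⟨fun g => hconj ⟨g.1, g.2⟩⟩)

end Subgroup

section Marks

variable {G : Type*} [Group G] [Fintype G]

theorem burnsideMark_mul_card (K U : Subgroup G) :
    burnsideMark K U * Nat.card K =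
      Nat.card {g : G // U ≤ K.map (MulAut.conj g).toMonoidHom} := by
  let fixed : Set (G ⧸ K) := {x | ∀ u ∈ U, u • x = x}
  have hpre : {g : G // U ≤ K.map (MulAut.conj g).toMonoidHom} ≃
      (QuotientGroup.mk ⁻¹' fixed : Set G) :=
    Equiv.subtypeEquivRight fun g => by
      rw [← Subgroup.stabilizer_mk_eq_map_conj]; rfl
  rw [Nat.card_congr (hpre.trans (QuotientGroup.preimageMkEquivSubgroupProdSet K fixed)),
    Nat.card_prod, burnsideMark, mul_comm]
  push_cast; rfl

theorem gluckMark_eq_card_div (H U : Subgroup G) :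
    gluckMark H U = Nat.card {g : G // H.map (MulAut.conj g).toMonoidHom = U} /
      Nat.card (Subgroup.normalizer (H : Set G)) := by
  set N := Subgroup.normalizer (H : Set G)
  have hN : (Nat.card N : ℚ) ≠ 0 := by exact_mod_cast Nat.card_pos.ne'
  have hterm : ∀ K ∈ Finset.univ.filter (· ≤ H),
      IncidenceAlgebra.mu ℚ K H / (K.relIndex N : ℚ) * burnsideMark K U =
        IncidenceAlgebra.mu ℚ K H *
          Nat.card {g : G // U.comap (MulAut.conj g).toMonoidHom ≤ K} / Nat.card N := by
    intro K hK
    have hKN : (K.relIndex N : ℚ) * Nat.card K = Nat.card N := by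
      exact_mod_cast Subgroup.relIndex_mul_card
        ((Finset.mem_filter.mp hK).2.trans Subgroup.le_normalizer)
    have hK : (Nat.card K : ℚ) ≠ 0 := by exact_mod_cast Nat.card_pos.ne'
    simp only [← Subgroup.le_map_equiv_iff, ← burnsideMark_mul_card, ← hKN]
    field_simp
  rw [gluckMark, Finset.sum_congr rfl hterm, ← Finset.sum_div,
    IncidenceAlgebra.sum_mu_mul_card_le (fun g => U.comap (MulAut.conj g).toMonoidHom)]
  simp only [Subgroup.map_equiv_eq_iff]

end Marks

/-- Gluck's idempotent formula: under the (injective) mark homomorphism of the rational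
Burnside algebra, `e_H` has mark `1` at subgroups `U` conjugate to `H` and `0` otherwise;
in particular `e_H` is an idempotent of `B_ℚ(G)`. -/
theorem gluck_idempotent {G : Type*} [Group G] [Fintype G] (H : Subgroup G) :
    (∀ U : Subgroup G,
      gluckMark H U =
        if ∃ g : G, Subgroup.map (MulAut.conj g).toMonoidHom H = U then 1 else 0) ∧
    (∀ U : Subgroup G, gluckMark H U * gluckMark H U = gluckMark H U) := by
  have hN : (Nat.card (Subgroup.normalizer (H : Set G)) : ℚ) ≠ 0 := by
    exact_mod_cast Nat.card_pos.ne'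
  have hmark : ∀ U : Subgroup G, gluckMark H U =
      if ∃ g : G, Subgroup.map (MulAut.conj g).toMonoidHom H = U then 1 else 0 := by
    intro U
    rw [gluckMark_eq_card_div, Subgroup.card_map_conj_eq]
    split_ifs
    · exact div_self hN
    · simp
  refine ⟨hmark, fun U => ?_⟩
  rw [hmark U]
  split_ifs <;> norm_num
end

section
/- Let G be a finite group. Then G is soluble if and only if the only idempotents of the Burnside ring B(G) are 0 and 1. -/
/-!
If `W ⊴ U` and `U/W` is a `p`-group, then `U/W` acts on the `W`-fixed points of a `G`-set `X`
with the `U`-fixed points as its fixed set, so `|X^U| ≡ |X^W| (mod p)`. The marks of an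
idempotent of `B(G)` lie in `{0, 1}`, so for soluble `G`, where every nontrivial subgroup has a
proper normal subgroup with `p`-group quotient, they all equal the mark at the trivial subgroup,
and the idempotent is `0` or `1`.

Conversely, a conjugation-invariant function `φ` on subgroups satisfying Dress's congruences
`|N(U)| ∣ ∑_{n ∈ N(U)} φ(⟨U, n⟩)` is the mark function of a virtual `G`-set: these congruences
hold for marks by Burnside's lemma for `N(U)` acting on `X^U`, and at a subgroup `K` of maximal
order in the support of `φ` they say that `|N(K) : K|`, the mark of `G/K` at `K`, divides `φ(K)`,
so that a multiple of `[G/K]` can be peeled off. The indicator function of the soluble subgroups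
satisfies the congruences because `⟨U, n⟩/U` is cyclic, so it is an idempotent of `B(G)`; it is
neither `0` nor `1` when `G` is insoluble.
-/

open scoped Classical

/-- The mark of the transitive `G`-set `G/K` at the subgroup `U`: the number of
`U`-fixed points of `G/K`. -/
noncomputable def burnsideIntMark {G : Type*} [Group G] [Fintype G] (K U : Subgroup G) : ℤ :=
  (Nat.card {x : G ⧸ K // ∀ u ∈ U, u • x = x} : ℤ)

open MulAction Subgroup Matrix

namespace MulAction

variable {G X : Type*} [Group G] [MulAction G X]

theorem mem_fixedPoints_subgroup_iff {U : Subgroup G} {x : X} :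
    x ∈ fixedPoints U X ↔ U ≤ stabilizer G x :=
  ⟨fun h u hu => h ⟨u, hu⟩, fun h u => h u.2⟩

theorem fixedPoints_map_subtype {H : Subgroup G} (W : Subgroup H) :
    fixedPoints (W.map H.subtype) X = fixedPoints W X := by
  ext x
  simp [mem_fixedPoints, Subgroup.smul_def]

theorem fixedPoints_subgroupOf {U H : Subgroup G} (h : U ≤ H) :
    fixedPoints (U.subgroupOf H) X = fixedPoints U X := by
  rw [← fixedPoints_map_subtype, subgroupOf_map_subtype, inf_of_le_left h]

theorem mem_fixedPoints_sup_zpowers {U : Subgroup G} {g : G} {x : X} :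
    x ∈ fixedPoints ↥(U ⊔ zpowers g) X ↔ x ∈ fixedPoints U X ∧ g • x = x := by
  simp only [mem_fixedPoints_subgroup_iff, sup_le_iff, zpowers_le, mem_stabilizer_iff]

theorem card_fixedPoints_map_conj (g : G) (U : Subgroup G) :
    Nat.card (fixedPoints (U.map (MulAut.conj g).toMonoidHom) X) = Nat.card (fixedPoints U X) := by
  refine (Nat.card_congr (Equiv.subtypeEquiv (MulAction.toPerm g) fun x => ?_)).symm
  change x ∈ fixedPoints U X ↔ g • x ∈ fixedPoints _ X
  rw [mem_fixedPoints_subgroup_iff, mem_fixedPoints_subgroup_iff,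
    stabilizer_smul_eq_stabilizer_map_conj, map_le_map_iff_of_injective (MulAut.conj g).injective]

theorem card_fixedPoints_modEq_of_isPGroup_quotient {H Y : Type*} [Group H] [MulAction H Y]
    [Finite Y] {W : Subgroup H} [W.Normal] {p : ℕ} [Fact p.Prime] (hp : IsPGroup p (H ⧸ W)) :
    Nat.card (fixedPoints H Y) ≡ Nat.card (fixedPoints W Y) [MOD p] := by
  have e : fixedPoints (H ⧸ W) (fixedPoints W Y) ≃ fixedPoints H Y :=
    { toFun y := ⟨y.1.1, fun h => congrArg Subtype.val (y.2 (h : H ⧸ W))⟩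
      invFun x := ⟨⟨x.1, fun w => x.2 w⟩, fun q => QuotientGroup.induction_on q
        fun h => Subtype.ext (x.2 h)⟩
      left_inv _ := rfl
      right_inv _ := rfl }
  rw [← Nat.card_congr e]
  exact (hp.card_modEq_card_fixedPoints _).symm

theorem card_fixedPoints_modEq_of_isPGroup [Finite X] {U : Subgroup G} (W : Subgroup U)
    [W.Normal] {p : ℕ} [Fact p.Prime] (hp : IsPGroup p (U ⧸ W)) :
    Nat.card (fixedPoints U X) ≡ Nat.card (fixedPoints (W.map U.subtype) X) [MOD p] := by
  rw [fixedPoints_map_subtype]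
  exact card_fixedPoints_modEq_of_isPGroup_quotient hp

theorem card_normalizer_dvd_sum_card_fixedPoints [Fintype G] [Finite X] (U : Subgroup G) :
    Nat.card (normalizer (U : Set G)) ∣
      ∑ n : normalizer (U : Set G), Nat.card (fixedPoints ↥(U ⊔ zpowers (n : G)) X) := by
  set N := normalizer (U : Set G)
  set Y := fixedPoints (U.subgroupOf N) X
  have hY : Y = fixedPoints U X := fixedPoints_subgroupOf le_normalizer
  have e : ∀ n : N, fixedBy Y n ≃ fixedPoints ↥(U ⊔ zpowers (n : G)) X := fun n =>
    { toFun y :=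
        ⟨y.1.1, mem_fixedPoints_sup_zpowers.2 ⟨hY ▸ y.1.2, congrArg Subtype.val y.2⟩⟩
      invFun x := ⟨⟨x.1, hY ▸ (mem_fixedPoints_sup_zpowers.1 x.2).1⟩,
        Subtype.ext (mem_fixedPoints_sup_zpowers.1 x.2).2⟩
      left_inv _ := rfl
      right_inv _ := rfl }
  have := Fintype.ofFinite X
  have burnside := sum_card_fixedBy_eq_card_orbits_mul_card_group N Y
  simp only [← Nat.card_eq_fintype_card, fun n => Nat.card_congr (e n)] at burnside
  exact burnside ▸ dvd_mul_left _ _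

theorem stabilizer_mk (K : Subgroup G) (g : G) :
    stabilizer G (g : G ⧸ K) = K.map (MulAut.conj g).toMonoidHom := by
  simpa using stabilizer_smul_eq_stabilizer_map_conj g ((1 : G) : G ⧸ K)

theorem fixedPoints_quotient_nonempty_iff {K U : Subgroup G} :
    (fixedPoints U (G ⧸ K)).Nonempty ↔ ∃ g : G, U ≤ K.map (MulAut.conj g).toMonoidHom := by
  simp only [Set.Nonempty, QuotientGroup.mk_surjective.exists]
  exact exists_congr fun g => mem_fixedPoints_subgroup_iff.trans (by rw [stabilizer_mk])

theorem card_mul_card_fixedPoints_quotient_self [Finite G] (K : Subgroup G) :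
    Nat.card K * Nat.card (fixedPoints K (G ⧸ K)) = Nat.card (normalizer (K : Set G)) := by
  rw [Nat.card_congr (Sylow.fixedPointsMulLeftCosetsEquivQuotient K),
    card_eq_card_quotient_mul_card_subgroup (K.subgroupOf (normalizer (K : Set G))),
    Nat.card_congr (subgroupOfEquivOfLe le_normalizer).toEquiv, mul_comm]
  rfl

end MulAction

theorem Subgroup.card_lt_card_of_lt {G : Type*} [Group G] {H K : Subgroup G} [Finite K]
    (h : H < K) : Nat.card H < Nat.card K :=
  (card_le_of_le h.le).lt_of_ne fun e => h.ne (eq_of_le_of_card_ge h.le e.ge)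

theorem eq_of_modEq_of_isIdempotentElem {p : ℕ} (hp : p.Prime) {a b : ℤ}
    (ha : IsIdempotentElem a) (hb : IsIdempotentElem b) (h : a ≡ b [ZMOD p]) : a = b := by
  rw [IsIdempotentElem.iff_eq_zero_or_one] at ha hb
  have := hp.two_le
  have := Int.eq_zero_of_abs_lt_dvd h.dvd <| by
    rcases ha with rfl | rfl <;> rcases hb with rfl | rfl <;> simp <;> omega
  omega

theorem CommGroup.exists_ne_top_isPGroup_quotient (A : Type*) [CommGroup A] [Finite A]
    [Nontrivial A] : ∃ p, p.Prime ∧ ∃ B : Subgroup A, B ≠ ⊤ ∧ IsPGroup p (A ⧸ B) := by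
  obtain ⟨p, hp, hpA⟩ := Nat.exists_prime_and_dvd (Finite.one_lt_card (α := A)).ne'
  have := Fact.mk hp
  obtain ⟨a, ha⟩ := exists_prime_orderOf_dvd_card' p hpA
  refine ⟨p, hp, (powMonoidHom p).range, fun htop => ?_, fun q => ⟨1, ?_⟩⟩
  · have hinj := Finite.injective_iff_surjective.2 (MonoidHom.range_eq_top.1 htop)
    have : a = 1 := hinj (by simp [← ha, pow_orderOf_eq_one])
    exact hp.ne_one (by rw [← ha, this, orderOf_one])
  · induction q using QuotientGroup.induction_on with
    | H x => exact (QuotientGroup.eq_one_iff _).2 ⟨x, by simp⟩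

theorem Group.IsSolvable.exists_normal_ne_top_isPGroup_quotient (H : Type*) [Group H] [Finite H]
    [Group.IsSolvable H] [Nontrivial H] :
    ∃ p, p.Prime ∧ ∃ (W : Subgroup H) (_ : W.Normal), W ≠ ⊤ ∧ IsPGroup p (H ⧸ W) := by
  have : Nontrivial (Abelianization H) :=
    QuotientGroup.nontrivial_iff.2 (commutator_lt_top_of_nontrivial H).ne
  obtain ⟨p, hp, B, hB, hpB⟩ := CommGroup.exists_ne_top_isPGroup_quotient (Abelianization H)
  let f := (QuotientGroup.mk' B).comp Abelianization.of
  have hf : Function.Surjective f :=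
    (QuotientGroup.mk'_surjective B).comp (QuotientGroup.mk'_surjective _)
  let e := QuotientGroup.quotientKerEquivOfSurjective f hf
  have := QuotientGroup.nontrivial_iff.2 hB
  exact ⟨p, hp, f.ker, inferInstance, QuotientGroup.nontrivial_iff.1 e.toEquiv.nontrivial,
    hpB.of_equiv e.symm⟩

theorem isSolvable_sup_zpowers {G : Type*} [Group G] {U : Subgroup G} [Group.IsSolvable U] {n : G}
    (hn : n ∈ normalizer (U : Set G)) : Group.IsSolvable ↥(U ⊔ zpowers n) := by
  have hle : zpowers n ≤ normalizer (U : Set G) := zpowers_le.2 hn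
  have := normal_subgroupOf_of_le_normalizer hle
  have := normal_subgroupOf_sup_of_le_normalizer hle
  have : Group.IsSolvable (zpowers n) := Group.isSolvable_of_comm Std.Commutative.comm
  rw [sup_comm, Group.isSolvable_iff_subgroup_quotient (U.subgroupOf (zpowers n ⊔ U))]
  exact ⟨Group.isSolvable_of_isSolvable_injective
      (f := (subgroupOfEquivOfLe le_sup_right).toMonoidHom) (MulEquiv.injective _),
    Group.isSolvable_of_surjective
      (f := (QuotientGroup.quotientInfEquivProdNormalizerQuotient _ _ hle).toMonoidHom)
      (MulEquiv.surjective _)⟩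

noncomputable def solvableSubgroupIndicator (G : Type*) [Group G] (U : Subgroup G) : ℤ :=
  if Group.IsSolvable U then 1 else 0

section Marks

variable {G : Type*} [Group G] [Fintype G]

theorem burnsideIntMark_eq_card_fixedPoints (K U : Subgroup G) :
    burnsideIntMark K U = Nat.card (fixedPoints U (G ⧸ K)) := by
  unfold burnsideIntMark
  exact congrArg _ (Nat.card_congr
    (Equiv.subtypeEquivRight fun _ => Subtype.forall.symm.trans mem_fixedPoints.symm))

theorem burnsideIntMark_ne_zero_iff {K U : Subgroup G} :
    burnsideIntMark K U ≠ 0 ↔ ∃ g : G, U ≤ K.map (MulAut.conj g).toMonoidHom := by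
  rw [burnsideIntMark_eq_card_fixedPoints, Nat.cast_ne_zero, Nat.card_ne_zero,
    Set.nonempty_coe_sort, fixedPoints_quotient_nonempty_iff]
  exact and_iff_left (Finite.of_fintype _)

theorem burnsideIntMark_map_conj (K U : Subgroup G) (g : G) :
    burnsideIntMark K (U.map (MulAut.conj g).toMonoidHom) = burnsideIntMark K U := by
  rw [burnsideIntMark_eq_card_fixedPoints, burnsideIntMark_eq_card_fixedPoints]
  exact congrArg _ (card_fixedPoints_map_conj g U)

theorem card_mul_burnsideIntMark_self (K : Subgroup G) :
    (Nat.card K : ℤ) * burnsideIntMark K K = Nat.card (normalizer (K : Set G)) := by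
  rw [burnsideIntMark_eq_card_fixedPoints, ← Nat.cast_mul,
    card_mul_card_fixedPoints_quotient_self]

theorem burnsideIntMark_modEq {U : Subgroup G} (K : Subgroup G) (W : Subgroup U) [W.Normal]
    {p : ℕ} [Fact p.Prime] (hp : IsPGroup p (U ⧸ W)) :
    burnsideIntMark K U ≡ burnsideIntMark K (W.map U.subtype) [ZMOD p] := by
  simp only [burnsideIntMark_eq_card_fixedPoints]
  exact Int.natCast_modEq_iff.2 (card_fixedPoints_modEq_of_isPGroup W hp)

theorem card_normalizer_dvd_sum_burnsideIntMark (K U : Subgroup G) :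
    (Nat.card (normalizer (U : Set G)) : ℤ) ∣
      ∑ n : normalizer (U : Set G), burnsideIntMark K (U ⊔ zpowers (n : G)) := by
  simp only [burnsideIntMark_eq_card_fixedPoints, ← Nat.cast_sum]
  exact Int.natCast_dvd_natCast.2 (card_normalizer_dvd_sum_card_fixedPoints U)

theorem card_lt_of_burnsideIntMark_ne_zero {ψ : Subgroup G → ℤ}
    (hψ : ∀ (g : G) (U : Subgroup G), ψ (U.map (MulAut.conj g).toMonoidHom) = ψ U)
    {K U : Subgroup G} (hK : ψ K = 0) (hU : ψ U ≠ 0) (hm : burnsideIntMark K U ≠ 0) :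
    Nat.card U < Nat.card K := by
  obtain ⟨g, hg⟩ := burnsideIntMark_ne_zero_iff.1 hm
  have hcard : Nat.card (K.map (MulAut.conj g).toMonoidHom) = Nat.card K :=
    card_map_of_injective (MulAut.conj g).injective
  refine lt_of_le_of_ne (hcard ▸ card_le_of_le hg) fun h => hU ?_
  rw [eq_of_le_of_card_ge hg (hcard.trans h.symm).le, hψ, hK]

variable (G) in
def dressCongruenceSubgroup : AddSubgroup (Subgroup G → ℤ) where
  carrier := {φ | (∀ (g : G) (U : Subgroup G), φ (U.map (MulAut.conj g).toMonoidHom) = φ U) ∧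
    ∀ U : Subgroup G, (Nat.card (normalizer (U : Set G)) : ℤ) ∣
      ∑ n : normalizer (U : Set G), φ (U ⊔ zpowers (n : G))}
  add_mem' := by
    rintro φ ψ ⟨hφ, hφ'⟩ ⟨hψ, hψ'⟩
    refine ⟨fun g U => by simp only [Pi.add_apply, hφ, hψ], fun U => ?_⟩
    simpa only [Pi.add_apply, Finset.sum_add_distrib] using dvd_add (hφ' U) (hψ' U)
  zero_mem' := ⟨fun _ _ => rfl, fun _ => by simp⟩
  neg_mem' := by
    rintro φ ⟨hφ, hφ'⟩
    refine ⟨fun g U => by simp only [Pi.neg_apply, hφ], fun U => ?_⟩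
    simpa only [Pi.neg_apply, Finset.sum_neg_distrib, dvd_neg] using hφ' U

theorem burnsideIntMark_mem_dressCongruenceSubgroup (K : Subgroup G) :
    burnsideIntMark K ∈ dressCongruenceSubgroup G :=
  ⟨fun g U => burnsideIntMark_map_conj K U g, card_normalizer_dvd_sum_burnsideIntMark K⟩

variable (G) in
/-- `c ᵥ* burnsideMarkMatrix G` is the image of `∑ K, c K • [G/K] ∈ B(G)` under the mark
homomorphism `B(G) → ∏_U ℤ`, an injective ring homomorphism. -/
noncomputable def burnsideMarkMatrix : Matrix (Subgroup G) (Subgroup G) ℤ :=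
  Matrix.of burnsideIntMark

theorem vecMul_burnsideMarkMatrix_apply (c : Subgroup G → ℤ) (U : Subgroup G) :
    (c ᵥ* burnsideMarkMatrix G) U = ∑ K, c K * burnsideIntMark K U :=
  rfl

theorem burnsideIntMark_self_dvd {φ : Subgroup G → ℤ} (hφ : φ ∈ dressCongruenceSubgroup G)
    {K : Subgroup G} (hK : ∀ U : Subgroup G, Nat.card K < Nat.card U → φ U = 0) :
    burnsideIntMark K K ∣ φ K := by
  set N := normalizer (K : Set G)
  have hterm (n : N) : φ (K ⊔ zpowers (n : G)) = if (n : G) ∈ K then φ K else 0 := by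
    split_ifs with hn
    · rw [sup_eq_left.2 (zpowers_le.2 hn)]
    · exact hK _ (card_lt_card_of_lt (left_lt_sup.2 (zpowers_le.not.2 hn)))
  have hcount : (Finset.univ.filter fun n : N => (n : G) ∈ K).card = Nat.card K := by
    rw [← Fintype.card_subtype, ← Nat.card_eq_fintype_card]
    exact Nat.card_congr (subgroupOfEquivOfLe le_normalizer).toEquiv
  have hdvd := hφ.2 K
  rw [Finset.sum_congr rfl fun n _ => hterm n, Finset.sum_ite, Finset.sum_const_zero, add_zero,
    Finset.sum_const, hcount, nsmul_eq_mul, ← card_mul_burnsideIntMark_self] at hdvd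
  exact (mul_dvd_mul_iff_left (Nat.cast_ne_zero.2 Nat.card_pos.ne')).1 hdvd

theorem exists_support_sub_smul_burnsideIntMark_subset {φ : Subgroup G → ℤ}
    (hφ : φ ∈ dressCongruenceSubgroup G) {K : Subgroup G}
    (hK : ∀ U : Subgroup G, Nat.card K < Nat.card U → φ U = 0) :
    ∃ t : ℤ, φ - t • burnsideIntMark K ∈ dressCongruenceSubgroup G ∧
      Function.support (φ - t • burnsideIntMark K) ⊆
        {U | Nat.card U < Nat.card K} ∪ (Function.support φ \ {K}) := by
  obtain ⟨t, ht⟩ := burnsideIntMark_self_dvd hφ hK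
  have hψ := sub_mem hφ (zsmul_mem (burnsideIntMark_mem_dressCongruenceSubgroup K) t)
  have hψK : (φ - t • burnsideIntMark K) K = 0 := by simp [ht, mul_comm]
  refine ⟨t, hψ, fun U hU => ?_⟩
  by_cases hm : burnsideIntMark K U = 0
  · exact Or.inr ⟨by simpa [hm] using hU, by rintro rfl; exact hU hψK⟩
  · exact Or.inl (card_lt_of_burnsideIntMark_ne_zero hψ.1 hψK hU hm)

theorem exists_vecMul_eq_of_card_lt {φ : Subgroup G → ℤ}
    (hφ : φ ∈ dressCongruenceSubgroup G) (n : ℕ)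
    (hn : ∀ U : Subgroup G, φ U ≠ 0 → Nat.card U < n) :
    ∃ c, c ᵥ* burnsideMarkMatrix G = φ := by
  induction n generalizing φ with
  | zero =>
    refine ⟨0, funext fun U => ?_⟩
    rw [zero_vecMul, Pi.zero_apply]
    by_contra h
    exact Nat.not_lt_zero _ (hn U (Ne.symm h))
  | succ n ih =>
    -- the subgroups of order `n` in the support are removed one at a time
    suffices key : ∀ s : Finset (Subgroup G), (∀ K ∈ s, Nat.card K = n) →
        ∀ φ ∈ dressCongruenceSubgroup G, (∀ U, φ U ≠ 0 → Nat.card U < n ∨ U ∈ s) →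
        ∃ c, c ᵥ* burnsideMarkMatrix G = φ from
      key (Finset.univ.filter fun K => Nat.card K = n) (by simp) φ hφ fun U hU => by
        have := hn U hU
        simp only [Finset.mem_filter, Finset.mem_univ, true_and]
        omega
    intro s
    induction s using Finset.induction_on with
    | empty => exact fun _ φ hφ hs => ih hφ fun U hU => by simpa using hs U hU
    | insert K s _ ihs =>
      intro hcard φ hφ hs
      have hKn := hcard K (Finset.mem_insert_self K s)
      have hK (U : Subgroup G) (hU : Nat.card K < Nat.card U) : φ U = 0 := by
        by_contra h
        rcases hs U h with h | h
        · omega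
        · have := hcard U h
          omega
      obtain ⟨t, hψ, hsupp⟩ := exists_support_sub_smul_burnsideIntMark_subset hφ hK
      have hs' (L : Subgroup G) (hL : L ∈ s) : Nat.card L = n :=
        hcard L (Finset.mem_insert_of_mem hL)
      obtain ⟨c, hc⟩ := ihs hs' _ hψ fun U hU => by
        rcases hsupp hU with h | ⟨hφU, hUK⟩
        · exact Or.inl (hKn ▸ h)
        · exact (hs U hφU).imp_right fun h => (Finset.mem_insert.1 h).resolve_left hUK
      refine ⟨c + Pi.single K t, ?_⟩
      rw [add_vecMul, hc, single_vecMul]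
      exact sub_add_cancel φ _

theorem exists_vecMul_eq_of_mem_dressCongruenceSubgroup {φ : Subgroup G → ℤ}
    (hφ : φ ∈ dressCongruenceSubgroup G) : ∃ c, c ᵥ* burnsideMarkMatrix G = φ :=
  exists_vecMul_eq_of_card_lt hφ (Nat.card G + 1) fun U _ =>
    Nat.lt_succ_of_le (card_le_card_group U)

theorem vecMul_burnsideMarkMatrix_modEq (c : Subgroup G → ℤ) {U : Subgroup G} (W : Subgroup U)
    [W.Normal] {p : ℕ} [Fact p.Prime] (hp : IsPGroup p (U ⧸ W)) :
    (c ᵥ* burnsideMarkMatrix G) U ≡ (c ᵥ* burnsideMarkMatrix G) (W.map U.subtype) [ZMOD p] :=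
  Int.ModEq.sum fun K _ => (burnsideIntMark_modEq K W hp).mul_left _

theorem vecMul_burnsideMarkMatrix_apply_eq_apply_bot [Group.IsSolvable G] {c : Subgroup G → ℤ}
    (hc : IsIdempotentElem (c ᵥ* burnsideMarkMatrix G)) (U : Subgroup G) :
    (c ᵥ* burnsideMarkMatrix G) U = (c ᵥ* burnsideMarkMatrix G) ⊥ := by
  induction hn : Nat.card U using Nat.strong_induction_on generalizing U with
  | _ n ih =>
    rcases eq_or_ne U ⊥ with rfl | hU
    · rfl
    have := (nontrivial_iff_ne_bot U).2 hU
    obtain ⟨p, hp, W, _, hW, hpW⟩ := Group.IsSolvable.exists_normal_ne_top_isPGroup_quotient U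
    have := Fact.mk hp
    have hWU : W.map U.subtype < U := by
      have := (map_subtype_lt_map_subtype (H := W) (K := ⊤)).2 (lt_top_iff_ne_top.2 hW)
      rwa [← MonoidHom.range_eq_map, range_subtype] at this
    rw [eq_of_modEq_of_isIdempotentElem hp (congrFun hc U) (congrFun hc _)
      (vecMul_burnsideMarkMatrix_modEq c W hpW), ih _ (hn ▸ card_lt_card_of_lt hWU) _ rfl]

theorem eq_zero_or_eq_one_of_isIdempotentElem [Group.IsSolvable G] {c : Subgroup G → ℤ}
    (hc : IsIdempotentElem (c ᵥ* burnsideMarkMatrix G)) :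
    c ᵥ* burnsideMarkMatrix G = 0 ∨ c ᵥ* burnsideMarkMatrix G = 1 := by
  have hconst := vecMul_burnsideMarkMatrix_apply_eq_apply_bot hc
  rcases IsIdempotentElem.iff_eq_zero_or_one.1 (congrFun hc ⊥) with h | h
  · exact Or.inl (funext fun U => (hconst U).trans h)
  · exact Or.inr (funext fun U => (hconst U).trans h)

theorem solvableSubgroupIndicator_mem_dressCongruenceSubgroup :
    solvableSubgroupIndicator G ∈ dressCongruenceSubgroup G := by
  refine ⟨fun g U => ?_, fun U => ?_⟩
  · let e := U.equivMapOfInjective (MulAut.conj g).toMonoidHom (MulAut.conj g).injective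
    have : Group.IsSolvable (U.map (MulAut.conj g).toMonoidHom) ↔ Group.IsSolvable U :=
      ⟨fun _ => Group.isSolvable_of_isSolvable_injective (f := e.toMonoidHom) e.injective,
        fun _ => Group.isSolvable_of_surjective (f := e.toMonoidHom) e.surjective⟩
    simp only [solvableSubgroupIndicator, this]
  · by_cases hU : Group.IsSolvable U
    · have (n : normalizer (U : Set G)) :
          solvableSubgroupIndicator G (U ⊔ zpowers (n : G)) = 1 :=
        if_pos (isSolvable_sup_zpowers n.2)
      simp [this, Nat.card_eq_fintype_card]
    · have (n : normalizer (U : Set G)) :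
          solvableSubgroupIndicator G (U ⊔ zpowers (n : G)) = 0 :=
        if_neg fun hJ => hU (by
          have := hJ
          exact Group.isSolvable_of_isSolvable_injective
            (inclusion_injective (le_sup_left : U ≤ U ⊔ zpowers (n : G))))
      simp [this]

theorem exists_nontrivial_idempotent_of_not_isSolvable (hG : ¬Group.IsSolvable G) :
    ∃ c, IsIdempotentElem (c ᵥ* burnsideMarkMatrix G) ∧
      c ᵥ* burnsideMarkMatrix G ≠ 0 ∧ c ᵥ* burnsideMarkMatrix G ≠ 1 := by
  obtain ⟨c, hc⟩ :=
    exists_vecMul_eq_of_mem_dressCongruenceSubgroup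
      (solvableSubgroupIndicator_mem_dressCongruenceSubgroup (G := G))
  have htop : ¬Group.IsSolvable (⊤ : Subgroup G) := fun _ =>
    hG (Group.isSolvable_of_surjective
      (f := (topEquiv : (⊤ : Subgroup G) ≃* G).toMonoidHom) (MulEquiv.surjective _))
  refine ⟨c, hc ▸ funext fun U => ?_, hc ▸ fun h => ?_, hc ▸ fun h => ?_⟩
  · by_cases hU : Group.IsSolvable U <;> simp [solvableSubgroupIndicator, hU]
  · have : ¬Group.IsSolvable (⊥ : Subgroup G) := by
      simpa [solvableSubgroupIndicator] using congrFun h ⊥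
    exact this inferInstance
  · simpa [solvableSubgroupIndicator, htop] using congrFun h ⊤

end Marks

/-- Dress' theorem: a finite group `G` is soluble iff the only idempotents of the Burnside
ring `B(G)` are `0` and `1`.  An element of `B(G)` is an integer combination
`Σ_K c_K [G/K]` of transitive `G`-sets, represented here by its image under the injective
mark homomorphism `B(G) → ∏_U ℤ`; it is idempotent iff its mark function is pointwise
idempotent, it is `0` iff all marks vanish, and it is `1 = [G/G]` iff all marks are `1`. -/
theorem solvable_iff_burnside_idempotents {G : Type*} [Group G] [Fintype G] :
    IsSolvable G ↔
      ∀ c : Subgroup G → ℤ,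
        (∀ U : Subgroup G,
            (∑ K : Subgroup G, c K * burnsideIntMark K U) *
              (∑ K : Subgroup G, c K * burnsideIntMark K U) =
            ∑ K : Subgroup G, c K * burnsideIntMark K U) →
        (∀ U : Subgroup G, ∑ K : Subgroup G, c K * burnsideIntMark K U = 0) ∨
        (∀ U : Subgroup G, ∑ K : Subgroup G, c K * burnsideIntMark K U = 1) := by
  simp only [← vecMul_burnsideMarkMatrix_apply]
  constructor
  · intro hG c hc
    have : Group.IsSolvable G := hG
    simpa [funext_iff] using eq_zero_or_eq_one_of_isIdempotentElem (funext hc)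
  · intro h
    by_contra hG
    obtain ⟨c, hidem, h0, h1⟩ := exists_nontrivial_idempotent_of_not_isSolvable hG
    rcases h c (congrFun hidem) with h' | h'
    exacts [h0 (funext h'), h1 (funext h')]
end

section
/- Let G be a finite group, S a normal subgroup of G regarded as a G-set under conjugation. For crossed G-sets f₁ : X₁ → S and f₂ : X₂ → S (G-equivariant maps), the map X₁ × X₂ → X₂ × X₁ sending (x₁,x₂) to (f₁(x₁)·x₂, x₁) is an isomorphism of crossed G-sets from f₁ × f₂ to f₂ × f₁, where (f₁ × f₂)(x₁,x₂) = f₁(x₁)f₂(x₂). -/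
/-- For crossed `G`-sets `f₁ : X₁ → S`, `f₂ : X₂ → S` over a normal subgroup `S` of a
finite group `G`, the map `(x₁, x₂) ↦ (f₁(x₁) • x₂, x₁)` is an isomorphism of crossed
`G`-sets from `f₁ × f₂` to `f₂ × f₁`. -/
theorem crossed_G_set_product_comm {G : Type*} [Group G] [Finite G]
    (S : Subgroup G) (hS : S.Normal)
    {X₁ X₂ : Type*} [Finite X₁] [Finite X₂] [MulAction G X₁] [MulAction G X₂]
    (f₁ : X₁ → S) (f₂ : X₂ → S)
    (hf₁ : ∀ (g : G) (x : X₁), (f₁ (g • x) : G) = g * (f₁ x : G) * g⁻¹)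
    (hf₂ : ∀ (g : G) (x : X₂), (f₂ (g • x) : G) = g * (f₂ x : G) * g⁻¹) :
    letI e : X₁ × X₂ → X₂ × X₁ := fun p => ((f₁ p.1 : G) • p.2, p.1)
    Function.Bijective e ∧
      (∀ (g : G) (p : X₁ × X₂), e (g • p) = g • e p) ∧
      (∀ p : X₁ × X₂, (f₂ ((e p).1) : G) * (f₁ ((e p).2) : G)
          = (f₁ p.1 : G) * (f₂ p.2 : G)) := by
  refine ⟨?_, ?_, ?_⟩
  · constructor
    · intro p q h
      have h2 : p.1 = q.1 := congrArg Prod.snd h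
      have h1 : (f₁ p.1 : G) • p.2 = (f₁ q.1 : G) • q.2 := congrArg Prod.fst h
      rw [h2] at h1
      have := smul_left_cancel (f₁ q.1 : G) h1
      exact Prod.ext h2 this
    · intro q
      exact ⟨(q.2, (f₁ q.2 : G)⁻¹ • q.1), by simp⟩
  · intro g p
    show ((f₁ (g • p.1) : G) • (g • p.2), g • p.1) = (g • ((f₁ p.1 : G) • p.2), g • p.1)
    rw [hf₁, smul_smul, smul_smul]
    group
  · intro p
    show (f₂ ((f₁ p.1 : G) • p.2) : G) * (f₁ p.1 : G) = _
    rw [hf₂]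
    group
end
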